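/- If X is a locally compact well-filtered T₀ space, then the upper Vietoris topology and the Scott topology (of the Smyth order) on K(X) coincide. -/

import Mathlib

open Set Topology TopologicalSpace

universe u v

/-- A subset of a topological space is *saturated* if it equals the intersection of the
open sets containing it. -/
def IsSat {X : Type u} [TopologicalSpace X] (A : Set X) : Prop :=
  A = ⋂₀ {U : Set X | IsOpen U ∧ A ⊆ U}

/-- The saturation `↑a` of a point `a` : the intersection of all open sets containing `a`. -/
def satPt {X : Type u} [TopologicalSpace X] (a : X) : Set X :=
  ⋂₀ {U : Set X | IsOpen U ∧ a ∈ U}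

/-- `KS X` is the collection of all nonempty compact saturated subsets of `X`. -/
def KS (X : Type u) [TopologicalSpace X] : Type u :=
  {K : Set X // K.Nonempty ∧ IsCompact K ∧ IsSat K}

/-- The *Smyth order* on `KS X` : `K ≤ L` iff `L ⊆ K` (reverse inclusion). -/
instance KS.instPartialOrder {X : Type u} [TopologicalSpace X] : PartialOrder (KS X) where
  le K L := L.1 ⊆ K.1
  le_refl K := subset_rfl
  le_trans K L M h₁ h₂ := by intro x hx; exact h₁ (h₂ hx)
  le_antisymm K L h₁ h₂ := by exact Subtype.ext (subset_antisymm h₂ h₁)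

/-- The *upper Vietoris topology* on `KS X`, generated by the sets `□U = {K | K ⊆ U}`
for `U` open in `X`.  The resulting space is the Smyth power space `P_S(X)`. -/
def upperVietoris (X : Type u) [TopologicalSpace X] : TopologicalSpace (KS X) :=
  TopologicalSpace.generateFrom
    {S : Set (KS X) | ∃ U : Set X, IsOpen U ∧ S = {K : KS X | K.1 ⊆ U}}

/-- Scott-open subsets of a preorder: upper sets inaccessible by suprema of
(nonempty) directed sets. -/
def ScottOpen {P : Type u} [Preorder P] (U : Set P) : Prop :=
  IsUpperSet U ∧ ∀ d : Set P, d.Nonempty → DirectedOn (· ≤ ·) d →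
    ∀ a : P, IsLUB d a → a ∈ U → (d ∩ U).Nonempty

/-- The Scott topology of a preorder. -/
def scottTop (P : Type u) [Preorder P] : TopologicalSpace P where
  IsOpen := ScottOpen
  isOpen_univ := ⟨isUpperSet_univ, fun d hd _ _ _ _ => by simpa using hd⟩
  isOpen_inter := by
    rintro U V ⟨hUu, hUd⟩ ⟨hVu, hVd⟩
    refine ⟨hUu.inter hVu, fun d hd hdir a ha haUV => ?_⟩
    obtain ⟨x, hxd, hxU⟩ := hUd d hd hdir a ha haUV.1
    obtain ⟨y, hyd, hyV⟩ := hVd d hd hdir a ha haUV.2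
    obtain ⟨z, hzd, hxz, hyz⟩ := hdir x hxd y hyd
    exact ⟨z, hzd, hUu hxz hxU, hVu hyz hyV⟩
  isOpen_sUnion := by
    intro S hS
    refine ⟨isUpperSet_sUnion fun s hs => (hS s hs).1, fun d hd hdir a ha haU => ?_⟩
    obtain ⟨t, htS, hat⟩ := haU
    obtain ⟨x, hxd, hxt⟩ := (hS t htS).2 d hd hdir a ha hat
    exact ⟨x, hxd, t, htS, hxt⟩

/-- A topological space is *well-filtered* if for every nonempty family of nonempty compact
saturated sets which is filtered under reverse inclusion and every open `U` containing the
intersection of the family, some member of the family is contained in `U`. -/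
def WellFiltered (X : Type u) [TopologicalSpace X] : Prop :=
  ∀ 𝒦 : Set (Set X), 𝒦.Nonempty →
    (∀ K ∈ 𝒦, K.Nonempty ∧ IsCompact K ∧ IsSat K) →
    (∀ K₁ ∈ 𝒦, ∀ K₂ ∈ 𝒦, ∃ K₃ ∈ 𝒦, K₃ ⊆ K₁ ∧ K₃ ⊆ K₂) →
    ∀ U : Set X, IsOpen U → ⋂₀ 𝒦 ⊆ U → ∃ K ∈ 𝒦, K ⊆ U

/-- The specialization order of a topological space: `x ≤ y` iff `x ∈ cl {y}`. -/
def specLE {X : Type u} [TopologicalSpace X] (x y : X) : Prop := x ∈ closure {y}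

/-- Least upper bound with respect to an explicit relation. -/
def RelLUB {P : Type u} (r : P → P → Prop) (d : Set P) (a : P) : Prop :=
  (∀ x ∈ d, r x a) ∧ ∀ b : P, (∀ x ∈ d, r x b) → r a b

/-- Scott openness with respect to an explicit relation. -/
def RelScottOpen {P : Type u} (r : P → P → Prop) (U : Set P) : Prop :=
  (∀ ⦃x y : P⦄, x ∈ U → r x y → y ∈ U) ∧
  ∀ d : Set P, d.Nonempty → DirectedOn r d → ∀ a : P, RelLUB r d a → a ∈ U → (d ∩ U).Nonempty

/-- A `d`-space (monotone convergence space): the specialization order is directed complete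
and every open set is Scott open with respect to the specialization order. -/
def DSpace (X : Type u) [TopologicalSpace X] : Prop :=
  (∀ d : Set X, d.Nonempty → DirectedOn specLE d → ∃ a : X, RelLUB specLE d a) ∧
  ∀ U : Set X, IsOpen U → RelScottOpen specLE U

/-- A space is *sober* if every irreducible closed set is the closure of a unique point. -/
def SoberSp (Z : Type u) [TopologicalSpace Z] : Prop :=
  ∀ A : Set Z, IsClosed A → IsIrreducible A → ∃! z : Z, A = closure {z}

/-- A closed set `A` is a *Rudin set* if there is a (nonempty) family of nonempty compact
saturated sets, filtered under reverse inclusion, such that `A` is a minimal closed set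
meeting every member of the family. -/
def RudinSet {X : Type u} [TopologicalSpace X] (A : Set X) : Prop :=
  IsClosed A ∧
  ∃ 𝒦 : Set (Set X), 𝒦.Nonempty ∧
    (∀ K ∈ 𝒦, K.Nonempty ∧ IsCompact K ∧ IsSat K) ∧
    (∀ K₁ ∈ 𝒦, ∀ K₂ ∈ 𝒦, ∃ K₃ ∈ 𝒦, K₃ ⊆ K₁ ∧ K₃ ⊆ K₂) ∧
    (∀ K ∈ 𝒦, (A ∩ K).Nonempty) ∧
    (∀ B : Set X, IsClosed B → (∀ K ∈ 𝒦, (B ∩ K).Nonempty) → B ⊆ A → B = A)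

/-- A *Rudin space*: every irreducible closed subset is a Rudin set. -/
def RudinSpace (X : Type u) [TopologicalSpace X] : Prop :=
  ∀ A : Set X, IsClosed A → IsIrreducible A → RudinSet A

/-- A closed set `A` is *well-filtered determined* (WD) if every continuous map into a
well-filtered T₀ space sends it to a set whose closure is a point closure. -/
def WDSet {X : Type u} [TopologicalSpace X] (A : Set X) : Prop :=
  ∀ (Y : Type v) [TopologicalSpace Y] [T0Space Y], WellFiltered Y →
    ∀ f : X → Y, Continuous f → ∃ y : Y, closure (f '' A) = closure {y}

/-- A *well-filtered determined (WD) space*: every irreducible closed subset is WD. -/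
def WDSpace (X : Type u) [TopologicalSpace X] : Prop :=
  ∀ A : Set X, IsClosed A → IsIrreducible A → WDSet.{u, v} A

/-- Property S: for every irreducible closed set `A`, the family `{↑a : a ∈ A}` is an
irreducible subset of the Scott power space `Σ K(X)`, or
`◇A = {K ∈ K(X) : K ∩ A ≠ ∅}` is an irreducible closed subset of `Σ K(X)`. -/
def PropertyS (X : Type u) [TopologicalSpace X] : Prop :=
  ∀ A : Set X, IsClosed A → IsIrreducible A →
    @IsIrreducible (KS X) (scottTop (KS X)) {K : KS X | ∃ a ∈ A, K.1 = satPt a} ∨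
    (@IsClosed (KS X) (scottTop (KS X)) {K : KS X | (K.1 ∩ A).Nonempty} ∧
      @IsIrreducible (KS X) (scottTop (KS X)) {K : KS X | (K.1 ∩ A).Nonempty})

/-- The order of Jia's dcpo on `ℕ × ℕ × (ℕ ∪ {∞})`:
`(i₁,j₁,k₁) ≤ (i₂,j₂,k₂)` iff (`i₁ = i₂`, `j₁ = j₂` and `k₁ ≤ k₂`) or
(`i₂ = i₁ + 1`, `k₁ ≤ j₂` and `k₂ = ∞`). -/
def LJiaLE (a b : ℕ × ℕ × WithTop ℕ) : Prop :=
  (a.1 = b.1 ∧ a.2.1 = b.2.1 ∧ a.2.2 ≤ b.2.2) ∨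
  (b.1 = a.1 + 1 ∧ a.2.2 ≤ (b.2.1 : WithTop ℕ) ∧ b.2.2 = ⊤)

/-
In a locally compact space every `K ∈ K(X)` is the directed supremum, in the Smyth order, of
its compact saturated neighbourhoods `L`, so a Scott open set containing `K` contains such an
`L` and with it the upper Vietoris open set `□(int L)` around `K`. Conversely, in a
well-filtered space the supremum of a directed family in `K(X)` is its intersection, and
well-filteredness says exactly that `□U` is inaccessible by such suprema.
-/

section

variable {X : Type u} [TopologicalSpace X]

def saturation (A : Set X) : Set X := ⋂₀ {U : Set X | IsOpen U ∧ A ⊆ U}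

lemma subset_saturation (A : Set X) : A ⊆ saturation A :=
  fun _ hx => mem_sInter.2 fun _ hU => hU.2 hx

lemma saturation_subset {A U : Set X} (hU : IsOpen U) (h : A ⊆ U) : saturation A ⊆ U :=
  sInter_subset_of_mem ⟨hU, h⟩

lemma saturation_mono {A B : Set X} (h : A ⊆ B) : saturation A ⊆ saturation B :=
  sInter_subset_sInter fun _ hU => ⟨hU.1, h.trans hU.2⟩

lemma isSat_saturation (A : Set X) : IsSat (saturation A) :=
  subset_antisymm (subset_saturation _)
    (sInter_subset_sInter fun _ hU => ⟨hU.1, saturation_subset hU.1 hU.2⟩)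

lemma IsCompact.saturation {A : Set X} (hA : IsCompact A) : IsCompact (saturation A) := by
  refine isCompact_of_finite_subcover fun U hUo hcov => ?_
  obtain ⟨t, ht⟩ := hA.elim_finite_subcover U hUo ((subset_saturation A).trans hcov)
  exact ⟨t, saturation_subset (isOpen_biUnion fun i _ => hUo i) ht⟩

lemma IsSat.sInter {𝒦 : Set (Set X)} (h : ∀ K ∈ 𝒦, IsSat K) : IsSat (⋂₀ 𝒦) :=
  subset_antisymm (subset_saturation _) fun _ hx => mem_sInter.2 fun K hK =>
    (h K hK).symm ▸ saturation_mono (sInter_subset_of_mem hK) hx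

namespace KS

lemma le_iff {K L : KS X} : K ≤ L ↔ L.1 ⊆ K.1 := Iff.rfl

def ofCompact {Q : Set X} (hne : Q.Nonempty) (hQ : IsCompact Q) : KS X :=
  ⟨saturation Q, hne.mono (subset_saturation Q), hQ.saturation, isSat_saturation Q⟩

/-- The basic open set `□U` of the upper Vietoris topology. -/
def box (U : Set X) : Set (KS X) := {K | K.1 ⊆ U}

lemma mem_box {U : Set X} {K : KS X} : K ∈ box U ↔ K.1 ⊆ U := Iff.rfl

lemma isOpen_box {U : Set X} (hU : IsOpen U) : IsOpen[upperVietoris X] (box U) :=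
  isOpen_generateFrom_of_mem ⟨U, hU, rfl⟩

lemma isUpperSet_box (U : Set X) : IsUpperSet (box U) :=
  fun _ _ hKL hK => (le_iff.1 hKL).trans hK

section LocallyCompact

def compactNhds (K : KS X) : Set (KS X) := {L | K.1 ⊆ interior L.1}

variable [LocallyCompactSpace X]

lemma exists_mem_compactNhds_subset (K : KS X) {U : Set X} (hU : IsOpen U) (hKU : K.1 ⊆ U) :
    ∃ L ∈ compactNhds K, L.1 ⊆ U := by
  obtain ⟨Q, hQc, hKQ, hQU⟩ := exists_compact_between K.2.2.1 hU hKU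
  exact ⟨ofCompact (K.2.1.mono (hKQ.trans interior_subset)) hQc,
    hKQ.trans (interior_mono (subset_saturation Q)), saturation_subset hU hQU⟩

lemma compactNhds_nonempty (K : KS X) : (compactNhds K).Nonempty :=
  let ⟨L, hL, _⟩ := exists_mem_compactNhds_subset K isOpen_univ (subset_univ _)
  ⟨L, hL⟩

lemma directedOn_compactNhds (K : KS X) : DirectedOn (· ≤ ·) (compactNhds K) := by
  intro L₁ hL₁ L₂ hL₂
  obtain ⟨L, hKL, hL⟩ := exists_mem_compactNhds_subset K (isOpen_interior.inter isOpen_interior)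
    (subset_inter hL₁ hL₂)
  exact ⟨L, hKL, hL.trans (inter_subset_left.trans interior_subset),
    hL.trans (inter_subset_right.trans interior_subset)⟩

lemma isLUB_compactNhds (K : KS X) : IsLUB (compactNhds K) K := by
  refine ⟨fun L (hL : K.1 ⊆ interior L.1) => hL.trans interior_subset, fun M hM => ?_⟩
  change M.1 ⊆ K.1
  rw [K.2.2.2]
  refine fun x hx => mem_sInter.2 fun U hU => ?_
  obtain ⟨L, hKL, hLU⟩ := exists_mem_compactNhds_subset K hU.1 hU.2
  exact hLU (hM hKL hx)

end LocallyCompact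

end KS

section WellFiltered

variable (hwf : WellFiltered X) {d : Set (KS X)} (hne : d.Nonempty) (hd : DirectedOn (· ≤ ·) d)
include hwf hne hd

lemma WellFiltered.exists_mem_subset {U : Set X} (hU : IsOpen U)
    (h : ⋂₀ (Subtype.val '' d) ⊆ U) : ∃ K ∈ d, K.1 ⊆ U := by
  have hfilt : ∀ K₁ ∈ Subtype.val '' d, ∀ K₂ ∈ Subtype.val '' d,
      ∃ K₃ ∈ Subtype.val '' d, K₃ ⊆ K₁ ∧ K₃ ⊆ K₂ := by
    rintro _ ⟨K₁, h₁, rfl⟩ _ ⟨K₂, h₂, rfl⟩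
    obtain ⟨K₃, h₃, h₁₃, h₂₃⟩ := hd K₁ h₁ K₂ h₂
    exact ⟨K₃.1, mem_image_of_mem _ h₃, h₁₃, h₂₃⟩
  obtain ⟨_, ⟨K, hK, rfl⟩, hKU⟩ :=
    hwf _ (hne.image _) (by rintro _ ⟨K, -, rfl⟩; exact K.2) hfilt U hU h
  exact ⟨K, hK, hKU⟩

lemma WellFiltered.sInter_nonempty : (⋂₀ (Subtype.val '' d)).Nonempty := by
  by_contra h
  obtain ⟨K, -, hK⟩ :=
    hwf.exists_mem_subset hne hd isOpen_empty (not_nonempty_iff_eq_empty.1 h).le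
  exact K.2.1.ne_empty (subset_empty_iff.1 hK)

lemma WellFiltered.isCompact_sInter : IsCompact (⋂₀ (Subtype.val '' d)) := by
  refine isCompact_of_finite_subcover fun U hUo hcov => ?_
  obtain ⟨K, hK, hKU⟩ := hwf.exists_mem_subset hne hd (isOpen_iUnion hUo) hcov
  obtain ⟨t, ht⟩ := K.2.2.1.elim_finite_subcover U hUo hKU
  exact ⟨t, (sInter_subset_of_mem (mem_image_of_mem _ hK)).trans ht⟩

lemma WellFiltered.sInter_subset_of_isLUB {a : KS X} (ha : IsLUB d a) :
    ⋂₀ (Subtype.val '' d) ⊆ a.1 :=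
  let I : KS X := ⟨_, hwf.sInter_nonempty hne hd, hwf.isCompact_sInter hne hd,
    IsSat.sInter (by rintro _ ⟨K, -, rfl⟩; exact K.2.2.2)⟩
  KS.le_iff.1 <| ha.2 (show I ∈ upperBounds d from
    fun _ hK => sInter_subset_of_mem (mem_image_of_mem _ hK))

end WellFiltered

namespace KS

lemma upperVietoris_le_scottTop [LocallyCompactSpace X] : upperVietoris X ≤ scottTop (KS X) := by
  intro s (hs : ScottOpen s)
  refine (@isOpen_iff_forall_mem_open _ (upperVietoris X) _).2 fun K hK => ?_
  obtain ⟨L, hKL, hLs⟩ :=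
    hs.2 _ (compactNhds_nonempty K) (directedOn_compactNhds K) K (isLUB_compactNhds K) hK
  refine ⟨box (interior L.1), fun M hM => hs.1 ?_ hLs, isOpen_box isOpen_interior, hKL⟩
  exact le_iff.2 ((mem_box.1 hM).trans interior_subset)

lemma scottOpen_box (hwf : WellFiltered X) {U : Set X} (hU : IsOpen U) : ScottOpen (box U) :=
  ⟨isUpperSet_box U, fun _ hne hd _ ha haU =>
    hwf.exists_mem_subset hne hd hU ((hwf.sInter_subset_of_isLUB hne hd ha).trans haU)⟩

lemma scottTop_le_upperVietoris (hwf : WellFiltered X) : scottTop (KS X) ≤ upperVietoris X :=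
  le_generateFrom_iff_subset_isOpen.2 <| by
    rintro _ ⟨U, hU, rfl⟩
    exact scottOpen_box hwf hU

end KS

end

theorem stmt3_general {X : Type u} [TopologicalSpace X] [LocallyCompactSpace X]
    (hwf : WellFiltered X) :
    upperVietoris X = scottTop (KS X) :=
  le_antisymm KS.upperVietoris_le_scottTop (KS.scottTop_le_upperVietoris hwf)

/-- If `X` is a locally compact well-filtered `T₀` space, then the upper
Vietoris topology and the Scott topology (of the Smyth order) on `K(X)` coincide. -/
theorem stmt3 {X : Type u} [TopologicalSpace X] [T0Space X] [LocallyCompactSpace X]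
    (hwf : WellFiltered X) :
    upperVietoris X = scottTop (KS X) :=
  stmt3_general hwf
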